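/- For every n ≥ 2 and d ≥ 1 there is a unique ℂ(q,z)-linear map f_{n,1} : ℂ(q,z)[S_dB_n] → ℂ(q,z)[S_{d−1}B_n] such that for every β ∈ S_dB_n and every expression β = α_0 τ_{i_1} α_1 τ_{i_2} ⋯ τ_{i_d} α_d with α_0,…,α_d ∈ B_n and 1 ≤ i_1,…,i_d ≤ n−1, one has f_{n,1}(β) = Σ_{k=1}^{d} α_0 τ_{i_1} α_1 ⋯ τ_{i_{k−1}} α_{k−1} σ_{i_k} α_k τ_{i_{k+1}} α_{k+1} ⋯ τ_{i_d} α_d (the letter τ_{i_k} replaced by σ_{i_k}). In particular, this sum does not depend on the chosen expression of β, and every β ∈ S_dB_n admits such an expression. -/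

import Mathlib

open scoped TensorProduct DirectSum

set_option synthInstance.maxHeartbeats 1000000
set_option maxHeartbeats 2000000

namespace SingularHOMFLYPT

/-- Generators of the singular braid monoid on `n` strands: `pos i` is `σ_{i+1}`,
`neg i` is `σ_{i+1}⁻¹` and `tau i` is `τ_{i+1}`, for `i : Fin (n-1)`. -/
inductive SBGen (n : ℕ) : Type
  | pos : Fin (n - 1) → SBGen n
  | neg : Fin (n - 1) → SBGen n
  | tau : Fin (n - 1) → SBGen n

open FreeMonoid in
/-- The defining relations of the singular braid monoid `SB_n` (Baez, Birman). -/
inductive SBRel (n : ℕ) : FreeMonoid (SBGen n) → FreeMonoid (SBGen n) → Prop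
  | inv_right (i : Fin (n - 1)) : SBRel n (of (.pos i) * of (.neg i)) 1
  | inv_left (i : Fin (n - 1)) : SBRel n (of (.neg i) * of (.pos i)) 1
  | sigma_tau (i : Fin (n - 1)) :
      SBRel n (of (.pos i) * of (.tau i)) (of (.tau i) * of (.pos i))
  | braid (i j : Fin (n - 1)) (h : (i : ℕ) + 1 = j ∨ (j : ℕ) + 1 = i) :
      SBRel n (of (.pos i) * of (.pos j) * of (.pos i))
        (of (.pos j) * of (.pos i) * of (.pos j))
  | braid_tau (i j : Fin (n - 1)) (h : (i : ℕ) + 1 = j ∨ (j : ℕ) + 1 = i) :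
      SBRel n (of (.pos i) * of (.pos j) * of (.tau i))
        (of (.tau j) * of (.pos i) * of (.pos j))
  | comm_ss (i j : Fin (n - 1)) (h : (i : ℕ) + 2 ≤ j ∨ (j : ℕ) + 2 ≤ i) :
      SBRel n (of (.pos i) * of (.pos j)) (of (.pos j) * of (.pos i))
  | comm_st (i j : Fin (n - 1)) (h : (i : ℕ) + 2 ≤ j ∨ (j : ℕ) + 2 ≤ i) :
      SBRel n (of (.pos i) * of (.tau j)) (of (.tau j) * of (.pos i))
  | comm_tt (i j : Fin (n - 1)) (h : (i : ℕ) + 2 ≤ j ∨ (j : ℕ) + 2 ≤ i) :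
      SBRel n (of (.tau i) * of (.tau j)) (of (.tau j) * of (.tau i))

/-- The congruence on the free monoid generated by the singular braid relations. -/
def SBcon (n : ℕ) : Con (FreeMonoid (SBGen n)) := conGen (SBRel n)

/-- The singular braid monoid on `n` strands, as a presented monoid. -/
abbrev SB (n : ℕ) : Type := (SBcon n).Quotient

/-- The canonical projection from the free monoid onto `SB n`. -/
def SB.mk {n : ℕ} : FreeMonoid (SBGen n) →* SB n := Con.mk' (SBcon n)

/-- The generator `σ_{i+1}` of `SB n`. -/
def sG {n : ℕ} (i : Fin (n - 1)) : SB n := SB.mk (.of (.pos i))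

/-- The generator `σ_{i+1}⁻¹` of `SB n`. -/
def sInvG {n : ℕ} (i : Fin (n - 1)) : SB n := SB.mk (.of (.neg i))

/-- The generator `τ_{i+1}` of `SB n`. -/
def tauG {n : ℕ} (i : Fin (n - 1)) : SB n := SB.mk (.of (.tau i))

theorem SB.sound {n : ℕ} {a b : FreeMonoid (SBGen n)} (h : SBRel n a b) :
    SB.mk a = SB.mk b :=
  Con.eq _ |>.2 (ConGen.Rel.of a b h)

/-- Lift a map on generators to a monoid homomorphism on `SB n`. -/
def SB.lift {n : ℕ} {M : Type*} [Monoid M] (f : SBGen n → M)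
    (h : ∀ a b, SBRel n a b → FreeMonoid.lift f a = FreeMonoid.lift f b) :
    SB n →* M :=
  Con.lift _ (FreeMonoid.lift f)
    (Con.conGen_le.2 fun a b hab => (Con.ker_rel _).2 (h a b hab))

@[simp] theorem SB.lift_mk {n : ℕ} {M : Type*} [Monoid M] (f : SBGen n → M)
    (h : ∀ a b, SBRel n a b → FreeMonoid.lift f a = FreeMonoid.lift f b)
    (w : FreeMonoid (SBGen n)) :
    SB.lift f h (SB.mk w) = FreeMonoid.lift f w :=
  Con.lift_coe _ w

/-- The number of singular points (`τ`-letters) of a generator. -/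
def degGen {n : ℕ} : SBGen n → Multiplicative ℕ
  | .tau _ => Multiplicative.ofAdd 1
  | _ => 1

/-- The monoid homomorphism `deg : SB n →* (ℕ, +)` counting singular points. -/
def degM {n : ℕ} : SB n →* Multiplicative ℕ :=
  SB.lift degGen (by
    rintro a b h
    cases h <;> simp [degGen, mul_comm])
/-- Shifting generators by `k`, viewing `SB n` inside `SB N` (strands `k+1, …, k+n`). -/
def shiftGen {n : ℕ} (N k : ℕ) (h : k + n ≤ N) : SBGen n → SBGen N
  | .pos i => .pos ⟨k + i, by have := i.2; omega⟩
  | .neg i => .neg ⟨k + i, by have := i.2; omega⟩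
  | .tau i => .tau ⟨k + i, by have := i.2; omega⟩

theorem shiftGen_rel {n : ℕ} (N k : ℕ) (h : k + n ≤ N) {a b : FreeMonoid (SBGen n)}
    (hab : SBRel n a b) :
    SBRel N (FreeMonoid.map (shiftGen N k h) a) (FreeMonoid.map (shiftGen N k h) b) := by
  cases hab <;>
    simp only [map_mul, map_one, FreeMonoid.map_of, shiftGen] <;>
    first
      | exact SBRel.inv_right _
      | exact SBRel.inv_left _
      | exact SBRel.sigma_tau _
      | (rename_i i j hij; exact SBRel.braid _ _ (by simp; omega))
      | (rename_i i j hij; first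
          | exact SBRel.braid_tau _ _ (by simp; omega)
          | exact SBRel.comm_ss _ _ (by simp; omega)
          | exact SBRel.comm_st _ _ (by simp; omega)
          | exact SBRel.comm_tt _ _ (by simp; omega))

/-- The monoid homomorphism `SB n →* SB N` placing a braid on the strands `k+1, …, k+n`. -/
def shiftHom {n : ℕ} (N k : ℕ) (h : k + n ≤ N) : SB n →* SB N :=
  Con.lift _ (SB.mk.comp (FreeMonoid.map (shiftGen N k h)))
    (Con.conGen_le.2 fun a b hab => (Con.ker_rel _).2 (SB.sound (shiftGen_rel N k h hab)))

/-- The natural inclusion `SB n →* SB N` (adding trivial strands on the right). -/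
def inclSB {n : ℕ} (N : ℕ) (h : n ≤ N) : SB n →* SB N := shiftHom N 0 (by omega)

/-- `α ∗ β`: the braid obtained by placing `β` (on `m` strands) above (to the right of)
`α` (on `n` strands), realized in `SB N` for `n + m ≤ N`. -/
def starIn {n m : ℕ} (N : ℕ) (h : n + m ≤ N) (α : SB n) (β : SB m) : SB N :=
  inclSB N (by omega) α * shiftHom N n h β
@[simp] theorem shiftHom_mk {n : ℕ} (N k : ℕ) (h : k + n ≤ N) (w : FreeMonoid (SBGen n)) :
    shiftHom N k h (SB.mk w) = SB.mk (FreeMonoid.map (shiftGen N k h) w) :=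
  Con.lift_coe _ w

theorem shiftHom_sG {n : ℕ} (N k : ℕ) (h : k + n ≤ N) (i : Fin (n - 1)) :
    shiftHom N k h (sG i) = sG ⟨k + i.1, by have := i.2; omega⟩ := rfl

theorem inclSB_sG {n : ℕ} (N : ℕ) (h : n ≤ N) (i : Fin (n - 1)) :
    inclSB N h (sG i) = sG ⟨0 + i.1, by have := i.2; omega⟩ := rfl

noncomputable section

/-- The field `ℂ(q)` of rational functions over `ℂ` in the variable `q`. -/
abbrev Kq : Type := RatFunc ℂ

/-- The field `ℂ(q,z) = ℂ(q)(z)` of rational functions over `ℂ` in the variables `q, z`. -/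
abbrev Lqz : Type := RatFunc Kq

/-- The variable `q`, as an element of `ℂ(q)`. -/
def qK : Kq := RatFunc.X

/-- The variable `z`, as an element of `ℂ(q,z)`. -/
def zL : Lqz := RatFunc.X

/-- The variable `q`, as an element of `ℂ(q,z)`. -/
def qL : Lqz := algebraMap Kq Lqz qK

/-- The Hecke relations `σ_k² = (q-1)σ_k + q` in the monoid algebra `ℂ(q)[SB_n]`. -/
def HeckeRel (n : ℕ) : MonoidAlgebra Kq (SB n) → MonoidAlgebra Kq (SB n) → Prop :=
  fun x y => ∃ i : Fin (n - 1),
    x = MonoidAlgebra.of Kq (SB n) (sG i) ^ 2 ∧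
    y = (qK - 1) • MonoidAlgebra.of Kq (SB n) (sG i) + qK • 1

/-- The singular Hecke algebra `H(SB_n)`: the quotient of `ℂ(q)[SB_n]` by the two-sided
ideal generated by the elements `σ_k² - (q-1)σ_k - q`. -/
abbrev Hecke (n : ℕ) : Type := RingQuot (HeckeRel n)

/-- The image of a singular braid in the singular Hecke algebra. -/
def heckeOf {n : ℕ} (β : SB n) : Hecke n :=
  RingQuot.mkAlgHom Kq (HeckeRel n) (MonoidAlgebra.of Kq (SB n) β)

/-- `H_z(SB_n) := ℂ(q,z) ⊗_{ℂ(q)} H(SB_n)`. -/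
abbrev HeckeZ (n : ℕ) : Type := Lqz ⊗[Kq] Hecke n

/-- The image of a singular braid in `H_z(SB_n)`. -/
def ofHZ {n : ℕ} (β : SB n) : HeckeZ n := (1 : Lqz) ⊗ₜ[Kq] heckeOf β

/-- The algebra homomorphism `H(SB_n) → H(SB_{n+1})` induced by the natural inclusion
`SB_n ↪ SB_{n+1}`. -/
def heckeIncl (n : ℕ) : Hecke n →ₐ[Kq] Hecke (n + 1) :=
  RingQuot.liftAlgHom Kq
    ⟨((RingQuot.mkAlgHom Kq (HeckeRel (n + 1))).comp
        (MonoidAlgebra.mapDomainAlgHom Kq Kq (inclSB (n + 1) (Nat.le_succ n)))),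
      by
        rintro x y ⟨i, rfl, rfl⟩
        have hi := i.2
        set i' : Fin ((n + 1) - 1) := ⟨0 + i.1, by omega⟩ with hi'
        have hgen : (MonoidAlgebra.mapDomainAlgHom Kq Kq (inclSB (n + 1) (Nat.le_succ n)))
            (MonoidAlgebra.of Kq (SB n) (sG i)) = MonoidAlgebra.of Kq (SB (n + 1)) (sG i') := by
          rw [MonoidAlgebra.of_apply, MonoidAlgebra.mapDomainAlgHom_apply,
            MonoidAlgebra.mapDomain_single, inclSB_sG, MonoidAlgebra.of_apply]
        have hrel : HeckeRel (n + 1) (MonoidAlgebra.of Kq (SB (n + 1)) (sG i') ^ 2)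
            ((qK - 1) • MonoidAlgebra.of Kq (SB (n + 1)) (sG i') + qK • 1) := ⟨i', rfl, rfl⟩
        have hmk := RingQuot.mkAlgHom_rel Kq hrel
        simp only [map_pow, map_add, map_smul, map_one] at hmk
        simp only [AlgHom.coe_comp, Function.comp_apply, map_pow, map_add, map_smul, map_one,
          hgen]
        exact hmk⟩

/-- The algebra homomorphism `ι_n : H_z(SB_n) → H_z(SB_{n+1})`. -/
def iotaHZ (n : ℕ) : HeckeZ n →ₐ[Lqz] HeckeZ (n + 1) :=
  Algebra.TensorProduct.map (AlgHom.id Lqz Lqz) (heckeIncl n)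
/-- The `ℂ(q)`-subspace `H(S_dB_n)` of the singular Hecke algebra spanned by the images of
the singular braids with `d` singular points. -/
def HSd (n d : ℕ) : Submodule Kq (Hecke n) :=
  Submodule.span Kq
    {x | ∃ β : SB n, degM β = Multiplicative.ofAdd d ∧ x = heckeOf β}

/-- The `ℂ(q,z)`-subspace `H_z(S_dB_n)` of `H_z(SB_n)` spanned by the images of the singular
braids with `d` singular points. -/
def HzSd (n d : ℕ) : Submodule Lqz (HeckeZ n) :=
  Submodule.span Lqz
    {x | ∃ β : SB n, degM β = Multiplicative.ofAdd d ∧ x = ofHZ β}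

/-- Strand counts: the positive natural numbers. -/
abbrev Idx : Type := {n : ℕ // 0 < n}

/-- The direct sum `⊕_{n ≥ 1} H_z(SB_n)`. -/
abbrev MV : Type := ⨁ i : Idx, HeckeZ i.1

instance instAddCommGroupHeckeZ (n : ℕ) : AddCommGroup (HeckeZ n) := inferInstance
instance instModuleHeckeZ (n : ℕ) : Module Lqz (HeckeZ n) := inferInstance
instance instAddCommGroupMV : AddCommGroup MV := inferInstance
instance instModuleMV : Module Lqz MV := inferInstance

/-- The canonical inclusion of the `n`-th summand of `⊕_{n ≥ 1} H_z(SB_n)`. -/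
def mvof (i : Idx) : HeckeZ i.1 →ₗ[Lqz] MV :=
  DirectSum.lof Lqz Idx (fun i => HeckeZ i.1) i

/-- Successor of a strand count. -/
def succI (i : Idx) : Idx := ⟨i.1 + 1, Nat.succ_pos _⟩

/-- The generator `σ_n` of `SB_{n+1}`. -/
def sigmaLast (i : Idx) : SB (i.1 + 1) := sG ⟨i.1 - 1, Nat.sub_lt i.2 one_pos⟩

/-- The Markov relations in `⊕_{n ≥ 1} H_z(SB_n)`: trace relations, stabilization relations
and positive Markov relations. -/
def markovRels : Set MV :=
  {x | ∃ (i : Idx) (a b : HeckeZ i.1), x = mvof i (a * b) - mvof i (b * a)} ∪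
  {x | ∃ (i : Idx) (a : HeckeZ i.1), x = mvof i a - mvof (succI i) (iotaHZ i.1 a)} ∪
  {x | ∃ (i : Idx) (a : HeckeZ i.1),
    x = mvof (succI i) (iotaHZ i.1 a * ofHZ (sigmaLast i)) - zL • mvof i a}

/-- The Markov module `Markov(⊔SB)`. -/
abbrev Markov : Type := MV ⧸ Submodule.span Lqz markovRels

instance instAddCommGroupMarkov : AddCommGroup Markov := inferInstance
instance instModuleMarkov : Module Lqz Markov := inferInstance

/-- The class `[a, m]` in the Markov module of an element `a ∈ H_z(SB_m)`. -/
def markovClass (m : ℕ) (hm : 0 < m) (a : HeckeZ m) : Markov :=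
  Submodule.Quotient.mk (mvof ⟨m, hm⟩ a)

/-- The class `[β, m]` in the Markov module of a singular braid `β ∈ SB_m`. -/
def braidClass (m : ℕ) (hm : 0 < m) (β : SB m) : Markov :=
  markovClass m hm (ofHZ β)

/-- The direct sum `⊕_{n ≥ 1} H_z(S_dB_n)`. -/
abbrev MVD (d : ℕ) : Type := ⨁ i : Idx, ↥(HzSd i.1 d)

instance instAddCommGroupMVD (d : ℕ) : AddCommGroup (MVD d) := inferInstance
instance instModuleMVD (d : ℕ) : Module Lqz (MVD d) := inferInstance

/-- The canonical inclusion of the `n`-th summand of `⊕_{n ≥ 1} H_z(S_dB_n)`. -/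
def mvdof (d : ℕ) (i : Idx) : ↥(HzSd i.1 d) →ₗ[Lqz] MVD d :=
  DirectSum.lof Lqz Idx (fun i => ↥(HzSd i.1 d)) i

/-- The Markov relations in `⊕_{n ≥ 1} H_z(S_dB_n)`. -/
def markovRelsD (d : ℕ) : Set (MVD d) :=
  {x | ∃ (i : Idx) (k l : ℕ), k + l = d ∧ ∃ (a b : HeckeZ i.1),
    a ∈ HzSd i.1 k ∧ b ∈ HzSd i.1 l ∧
    ∃ (hab : a * b ∈ HzSd i.1 d) (hba : b * a ∈ HzSd i.1 d),
      x = mvdof d i ⟨a * b, hab⟩ - mvdof d i ⟨b * a, hba⟩} ∪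
  {x | ∃ (i : Idx) (a : HeckeZ i.1) (ha : a ∈ HzSd i.1 d)
      (ha' : iotaHZ i.1 a ∈ HzSd (i.1 + 1) d),
    x = mvdof d i ⟨a, ha⟩ - mvdof d (succI i) ⟨iotaHZ i.1 a, ha'⟩} ∪
  {x | ∃ (i : Idx) (a : HeckeZ i.1) (ha : a ∈ HzSd i.1 d)
      (ha' : iotaHZ i.1 a * ofHZ (sigmaLast i) ∈ HzSd (i.1 + 1) d),
    x = mvdof d (succI i) ⟨iotaHZ i.1 a * ofHZ (sigmaLast i), ha'⟩ - zL • mvdof d i ⟨a, ha⟩}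

/-- The `d`-th Markov module `Markov(⊔S_dB)`. -/
abbrev MarkovD (d : ℕ) : Type := MVD d ⧸ Submodule.span Lqz (markovRelsD d)

instance instAddCommGroupMarkovD (d : ℕ) : AddCommGroup (MarkovD d) := inferInstance
instance instModuleMarkovD (d : ℕ) : Module Lqz (MarkovD d) := inferInstance

/-- The class `[β, m]` in the `d`-th Markov module of a singular braid `β ∈ S_dB_m`
(defined to be `0` if `β` does not have exactly `d` singular points). -/
def classD (d m : ℕ) (hm : 0 < m) (β : SB m) : MarkovD d :=
  if h : degM β = Multiplicative.ofAdd d then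
    Submodule.Quotient.mk (mvdof d ⟨m, hm⟩ ⟨ofHZ β, Submodule.subset_span ⟨β, h, rfl⟩⟩)
  else 0
/-- The singular braid `W_{d,k} = τ_1 τ_3 ⋯ τ_{2k-1} (τ_{2k+1}σ_{2k+1}) ⋯ (τ_{2d-1}σ_{2d-1})`
in `SB_{2d}` (for `1 ≤ d` and `k ≤ d`). -/
def W (d k : ℕ) : SB (2 * d) :=
  ((List.range d).map (fun j =>
    if h : 2 * j < 2 * d - 1 then
      (if j < k then tauG ⟨2 * j, h⟩ else tauG ⟨2 * j, h⟩ * sG ⟨2 * j, h⟩)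
    else 1)).prod

/-- The class of `W_{d,k}` in the `d`-th Markov module: `[W_{d,k}, 2d]` for `d ≥ 1`, and the
class `[W_{0,0}, 1]` of the trivial braid on one strand for `d = 0`. -/
def WclassD (d k : ℕ) : MarkovD d :=
  if hd : d = 0 then hd ▸ classD 0 1 one_pos 1
  else classD d (2 * d) (by omega) (W d k)

/-- The singular braid `α_0 τ_{i_1} α_1 τ_{i_2} ⋯ τ_{i_d} α_d`. -/
def sbWord {m d : ℕ} (α : Fin (d + 1) → SB m) (idx : Fin d → Fin (m - 1)) : SB m :=
  α 0 * ((List.ofFn fun j : Fin d => tauG (idx j) * α j.succ).prod)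

/-- The singular braid `α_0 τ_{i_1} α_1 ⋯ τ_{i_{k-1}} α_{k-1} x α_k τ_{i_{k+1}} ⋯ τ_{i_d} α_d`
obtained from `α_0 τ_{i_1} α_1 ⋯ τ_{i_d} α_d` by replacing the letter `τ_{i_k}` by `x`. -/
def sbWordRepl {m d : ℕ} (α : Fin (d + 1) → SB m) (idx : Fin d → Fin (m - 1))
    (k : Fin d) (x : SB m) : SB m :=
  α 0 * ((List.ofFn fun j : Fin d => (if j = k then x else tauG (idx j)) * α j.succ).prod)

/-- `RepGen false i = 1` (deleting a `τ` letter) and `RepGen true i = σ_{i+1}` (replacing a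
`τ` letter by the corresponding `σ` letter). -/
def RepGen {m : ℕ} (ε : Bool) (i : Fin (m - 1)) : SB m := if ε then sG i else 1

/-- `IsG d ε g` says that the linear map `g : Markov(⊔S_dB) → Markov(⊔S_{d-1}B)` is induced
by the family of maps `f_{n,ε}` (deletion of one `τ` letter for `ε = false`, replacement of one
`τ` letter by the corresponding `σ` letter for `ε = true`), i.e. that
`g([β,n]) = [f_{n,ε}(β), n]` for every singular braid `β ∈ S_dB_n`. -/
def IsG (d : ℕ) (ε : Bool) (g : MarkovD d →ₗ[Lqz] MarkovD (d - 1)) : Prop :=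
  ∀ (m : ℕ) (hm : 0 < m) (α : Fin (d + 1) → SB m) (idx : Fin d → Fin (m - 1)),
    (∀ j, degM (α j) = Multiplicative.ofAdd 0) →
    g (classD d m hm (sbWord α idx)) =
      ∑ k : Fin d, classD (d - 1) m hm (sbWordRepl α idx k (RepGen ε (idx k)))

/-- The `ℂ(q,z)`-vector space freely spanned by the set `S_dB_m` of singular braids on `m`
strands with `d` singular points. -/
abbrev FreeSd (m d : ℕ) : Type :=
  {β : SB m // degM β = Multiplicative.ofAdd d} →₀ Lqz

/-- The basis element of `ℂ(q,z)[S_dB_m]` corresponding to a braid `β ∈ S_dB_m` (defined to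
be `0` if `β` does not have exactly `d` singular points). -/
def freeElem {m : ℕ} (d : ℕ) (β : SB m) : FreeSd m d :=
  if h : degM β = Multiplicative.ofAdd d then Finsupp.single ⟨β, h⟩ 1 else 0

/-- Iterated product (power) with respect to a given bilinear multiplication. -/
def powAux (mul : Markov →ₗ[Lqz] Markov →ₗ[Lqz] Markov) (one x : Markov) : ℕ → Markov
  | 0 => one
  | k + 1 => mul x (powAux mul one x k)

/-!
The assignment `τ_i ↦ τ_i + ε σ_i` respects the defining relations of `SB_n` inside the dual
numbers over the monoid algebra of `SB_n` (for `σ_k σ_l τ_k = τ_l σ_k σ_l` the `ε`-parts agree by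
the braid relation), so it defines a monoid homomorphism. Its `ε`-part `D` satisfies the Leibniz
rule, kills `B_n` and sends `τ_i` to `σ_i`; hence `D(α_0 τ_{i_1} α_1 ⋯ τ_{i_d} α_d)` is the
required sum, which therefore depends only on `β`, and `f_{n,1}` is `D` extended linearly from the
basis `S_dB_n`. Reading off the `τ`-letters of a word representing `β` gives an expression, and
uniqueness holds because these expressions reach every basis element.
-/

namespace SB

variable {m : ℕ}

theorem sG_mul_sInvG (i : Fin (m - 1)) : sG i * sInvG i = 1 :=
  (map_mul SB.mk _ _).symm.trans (SB.sound (.inv_right i))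

theorem sInvG_mul_sG (i : Fin (m - 1)) : sInvG i * sG i = 1 :=
  (map_mul SB.mk _ _).symm.trans (SB.sound (.inv_left i))

theorem sG_mul_tauG_self (i : Fin (m - 1)) : sG i * tauG i = tauG i * sG i := by
  simpa only [sG, tauG, map_mul] using SB.sound (.sigma_tau i)

theorem sG_braid {i j : Fin (m - 1)} (h : (i : ℕ) + 1 = j ∨ (j : ℕ) + 1 = i) :
    sG i * sG j * sG i = sG j * sG i * sG j := by
  simpa only [sG, tauG, map_mul] using SB.sound (.braid i j h)

theorem sG_braid_tauG {i j : Fin (m - 1)} (h : (i : ℕ) + 1 = j ∨ (j : ℕ) + 1 = i) :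
    sG i * sG j * tauG i = tauG j * sG i * sG j := by
  simpa only [sG, tauG, map_mul] using SB.sound (.braid_tau i j h)

theorem sG_comm {i j : Fin (m - 1)} (h : (i : ℕ) + 2 ≤ j ∨ (j : ℕ) + 2 ≤ i) :
    sG i * sG j = sG j * sG i := by
  simpa only [sG, tauG, map_mul] using SB.sound (.comm_ss i j h)

theorem sG_tauG_comm {i j : Fin (m - 1)} (h : (i : ℕ) + 2 ≤ j ∨ (j : ℕ) + 2 ≤ i) :
    sG i * tauG j = tauG j * sG i := by
  simpa only [sG, tauG, map_mul] using SB.sound (.comm_st i j h)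

theorem tauG_comm {i j : Fin (m - 1)} (h : (i : ℕ) + 2 ≤ j ∨ (j : ℕ) + 2 ≤ i) :
    tauG i * tauG j = tauG j * tauG i := by
  simpa only [sG, tauG, map_mul] using SB.sound (.comm_tt i j h)

@[elab_as_elim]
theorem induction_on {P : SB m → Prop} (β : SB m) (one : P 1)
    (sG_mul : ∀ i β, P β → P (sG i * β)) (sInvG_mul : ∀ i β, P β → P (sInvG i * β))
    (tauG_mul : ∀ i β, P β → P (tauG i * β)) : P β := by
  obtain ⟨w, rfl⟩ := Con.mk'_surjective (c := SBcon m) β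
  induction w using FreeMonoid.recOn with
  | one => exact one
  | of_mul g w ih =>
    rw [map_mul]
    cases g
    exacts [sG_mul _ _ ih, sInvG_mul _ _ ih, tauG_mul _ _ ih]

end SB

section Degree

variable {m : ℕ}

@[simp] theorem degM_sG (i : Fin (m - 1)) : degM (sG i) = 1 := rfl

@[simp] theorem degM_sInvG (i : Fin (m - 1)) : degM (sInvG i) = 1 := rfl

@[simp] theorem degM_tauG (i : Fin (m - 1)) : degM (tauG i) = Multiplicative.ofAdd 1 := rfl

end Degree

section Words

variable {m d : ℕ}

theorem sbWord_zero (α : Fin 1 → SB m) (idx : Fin 0 → Fin (m - 1)) : sbWord α idx = α 0 := by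
  simp [sbWord]

theorem sbWord_succ (α : Fin (d + 2) → SB m) (idx : Fin (d + 1) → Fin (m - 1)) :
    sbWord α idx = α 0 * (tauG (idx 0) * sbWord (Fin.tail α) (Fin.tail idx)) := by
  simp [sbWord, List.ofFn_succ, Fin.tail, mul_assoc]

theorem sbWordRepl_zero (α : Fin (d + 2) → SB m) (idx : Fin (d + 1) → Fin (m - 1)) (x : SB m) :
    sbWordRepl α idx 0 x = α 0 * (x * sbWord (Fin.tail α) (Fin.tail idx)) := by
  simp [sbWordRepl, sbWord, List.ofFn_succ, Fin.tail, Fin.succ_ne_zero, mul_assoc]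

theorem sbWordRepl_succ (α : Fin (d + 2) → SB m) (idx : Fin (d + 1) → Fin (m - 1)) (k : Fin d)
    (x : SB m) :
    sbWordRepl α idx k.succ x
      = α 0 * (tauG (idx 0) * sbWordRepl (Fin.tail α) (Fin.tail idx) k x) := by
  simp [sbWordRepl, List.ofFn_succ, Fin.tail, (Fin.succ_ne_zero k).symm, mul_assoc]

theorem sbWord_cons (α : Fin (d + 1) → SB m) (idx : Fin d → Fin (m - 1)) (i : Fin (m - 1)) :
    sbWord (Fin.cons 1 α) (Fin.cons i idx) = tauG i * sbWord α idx := by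
  simp [sbWord_succ, Fin.tail_cons]

theorem sbWord_update_zero (α : Fin (d + 1) → SB m) (idx : Fin d → Fin (m - 1)) (x : SB m) :
    sbWord (Function.update α 0 (x * α 0)) idx = x * sbWord α idx := by
  simp [sbWord, mul_assoc]

theorem degM_sbWord {α : Fin (d + 1) → SB m} (idx : Fin d → Fin (m - 1))
    (hα : ∀ j, degM (α j) = Multiplicative.ofAdd 0) :
    degM (sbWord α idx) = Multiplicative.ofAdd d := by
  induction d with
  | zero => rw [sbWord_zero, hα]
  | succ d ih =>
    rw [sbWord_succ, map_mul, map_mul, hα, degM_tauG, ih (α := Fin.tail α) _ fun j => hα j.succ,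
      ← ofAdd_add, ← ofAdd_add, zero_add, add_comm]

theorem exists_sbWord {β : SB m} (h : degM β = Multiplicative.ofAdd d) :
    ∃ (α : Fin (d + 1) → SB m) (idx : Fin d → Fin (m - 1)),
      (∀ j, degM (α j) = Multiplicative.ofAdd 0) ∧ sbWord α idx = β := by
  induction β using SB.induction_on generalizing d with
  | one =>
    obtain rfl : d = 0 := by simpa using congrArg Multiplicative.toAdd h.symm
    exact ⟨fun _ => 1, finZeroElim, fun _ => map_one _, sbWord_zero _ _⟩
  | tauG_mul i β ih =>
    obtain ⟨α, idx, hα, hβ⟩ := ih (d := Multiplicative.toAdd (degM β)) rfl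
    obtain rfl : d = Multiplicative.toAdd (degM β) + 1 := by
      simpa [add_comm] using congrArg Multiplicative.toAdd h.symm
    refine ⟨Fin.cons 1 α, Fin.cons i idx, fun j => ?_, by rw [sbWord_cons, hβ]⟩
    cases j using Fin.cases <;> simp [hα]
  | _ i β ih =>
    obtain ⟨α, idx, hα, rfl⟩ := ih (by simpa using h)
    refine ⟨Function.update α 0 (_ * α 0), idx, fun j => ?_, sbWord_update_zero α idx _⟩
    cases j using Fin.cases <;> simp [hα, Fin.succ_ne_zero]

end Words

section TauDer

open MonoidAlgebra TrivSqZeroExt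

variable {k : Type*} [Semiring k] {m : ℕ}

def tauDualGen : SBGen m → DualNumber (MonoidAlgebra k (SB m))
  | .pos i => inl (of k _ (sG i))
  | .neg i => inl (of k _ (sInvG i))
  | .tau i => inl (of k _ (tauG i)) + inr (of k _ (sG i))

def tauDualHom : SB m →* DualNumber (MonoidAlgebra k (SB m)) :=
  SB.lift tauDualGen <| by
    rintro a b h
    cases h with
    | inv_right i => ext <;> simp [tauDualGen, SB.sG_mul_sInvG, one_def]
    | inv_left i => ext <;> simp [tauDualGen, SB.sInvG_mul_sG, one_def]
    | sigma_tau i => ext <;> simp [tauDualGen, SB.sG_mul_tauG_self]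
    | braid i j h => ext <;> simp [tauDualGen, SB.sG_braid h]
    | braid_tau i j h => ext <;> simp [tauDualGen, SB.sG_braid h, SB.sG_braid_tauG h]
    | comm_ss i j h => ext <;> simp [tauDualGen, SB.sG_comm h]
    | comm_st i j h => ext <;> simp [tauDualGen, SB.sG_comm h, SB.sG_tauG_comm h]
    | comm_tt i j h =>
      ext <;> simp [tauDualGen, SB.tauG_comm h, SB.sG_tauG_comm h, SB.sG_tauG_comm h.symm, add_comm]

@[simp] theorem tauDualHom_sG (i : Fin (m - 1)) :
    tauDualHom (sG i) = inl (of k (SB m) (sG i)) :=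
  SB.lift_mk _ _ _

@[simp] theorem tauDualHom_sInvG (i : Fin (m - 1)) :
    tauDualHom (sInvG i) = inl (of k (SB m) (sInvG i)) :=
  SB.lift_mk _ _ _

@[simp] theorem tauDualHom_tauG (i : Fin (m - 1)) :
    tauDualHom (tauG i) = inl (of k (SB m) (tauG i)) + inr (of k (SB m) (sG i)) :=
  SB.lift_mk _ _ _

theorem fst_tauDualHom (β : SB m) : (tauDualHom β).fst = of k _ β := by
  induction β using SB.induction_on with
  | one => simp only [map_one, fst_one]
  | _ i β ih => simp [ih]

def tauDer (β : SB m) : MonoidAlgebra k (SB m) := (tauDualHom β).snd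

theorem tauDer_mul (a b : SB m) :
    tauDer (a * b) = of k _ a * tauDer b + tauDer a * of k _ b := by
  simp only [tauDer, map_mul, DualNumber.snd_mul, fst_tauDualHom]

@[simp] theorem tauDer_one : tauDer (1 : SB m) = (0 : MonoidAlgebra k (SB m)) := by
  simp [tauDer]

@[simp] theorem tauDer_sG (i : Fin (m - 1)) : tauDer (sG i) = (0 : MonoidAlgebra k (SB m)) := by
  simp [tauDer]

@[simp] theorem tauDer_sInvG (i : Fin (m - 1)) :
    tauDer (sInvG i) = (0 : MonoidAlgebra k (SB m)) := by
  simp [tauDer]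

@[simp] theorem tauDer_tauG (i : Fin (m - 1)) : tauDer (tauG i) = of k (SB m) (sG i) := by
  simp [tauDer]

theorem tauDer_eq_zero_of_degM {β : SB m} (h : degM β = Multiplicative.ofAdd 0) :
    tauDer β = (0 : MonoidAlgebra k (SB m)) := by
  induction β using SB.induction_on with
  | one => exact tauDer_one
  | tauG_mul i β ih => simp at h
  | _ i β ih => simp_all [tauDer_mul]

theorem tauDer_sbWord {d : ℕ} {α : Fin (d + 1) → SB m} (idx : Fin d → Fin (m - 1))
    (hα : ∀ j, degM (α j) = Multiplicative.ofAdd 0) :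
    tauDer (sbWord α idx)
      = ∑ j : Fin d, of k (SB m) (sbWordRepl α idx j (sG (idx j))) := by
  induction d with
  | zero => simp [sbWord_zero, tauDer_eq_zero_of_degM (hα 0)]
  | succ d ih =>
    rw [sbWord_succ, tauDer_mul, tauDer_mul, tauDer_eq_zero_of_degM (hα 0), tauDer_tauG,
      ih (α := Fin.tail α) _ fun j => hα j.succ, Fin.sum_univ_succ]
    simp only [sbWordRepl_zero, sbWordRepl_succ, map_mul, zero_mul, add_zero, mul_add,
      Finset.mul_sum, Fin.tail]
    exact add_comm _ _

end TauDer

section FreeSd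

open Finsupp

variable {m d : ℕ}

theorem freeElem_eq_single {β : SB m} (h : degM β = Multiplicative.ofAdd d) :
    freeElem d β = single ⟨β, h⟩ 1 :=
  dif_pos h

theorem FreeSd.linearMap_ext_sbWord {V : Type*} [AddCommMonoid V] [Module Lqz V]
    {f g : FreeSd m d →ₗ[Lqz] V}
    (h : ∀ (α : Fin (d + 1) → SB m) (idx : Fin d → Fin (m - 1)),
      (∀ j, degM (α j) = Multiplicative.ofAdd 0) →
      f (freeElem d (sbWord α idx)) = g (freeElem d (sbWord α idx))) :
    f = g := by
  refine lhom_ext' fun ⟨β, hβ⟩ => LinearMap.ext_ring ?_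
  obtain ⟨α, idx, hα, rfl⟩ := exists_sbWord hβ
  simpa only [LinearMap.comp_apply, lsingle_apply, freeElem_eq_single hβ] using h α idx hα

variable (d) in
def toFreeSd : MonoidAlgebra Lqz (SB m) →ₗ[Lqz] FreeSd m d :=
  linearCombination Lqz (freeElem d) ∘ₗ (MonoidAlgebra.coeffLinearEquiv Lqz).toLinearMap

theorem toFreeSd_of (β : SB m) :
    toFreeSd d (MonoidAlgebra.of Lqz (SB m) β) = freeElem d β := by
  simp [toFreeSd]

variable (m d) in
def replaceTau : FreeSd m d →ₗ[Lqz] FreeSd m (d - 1) :=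
  linearCombination Lqz fun β => toFreeSd (d - 1) (tauDer β.1)

theorem replaceTau_freeElem_sbWord {α : Fin (d + 1) → SB m} (idx : Fin d → Fin (m - 1))
    (hα : ∀ j, degM (α j) = Multiplicative.ofAdd 0) :
    replaceTau m d (freeElem d (sbWord α idx))
      = ∑ k : Fin d, freeElem (d - 1) (sbWordRepl α idx k (sG (idx k))) := by
  simp only [freeElem_eq_single (degM_sbWord idx hα), replaceTau, linearCombination_single,
    one_smul, tauDer_sbWord idx hα, map_sum, toFreeSd_of]

end FreeSd

theorem exists_unique_f1_general (m : ℕ) (d : ℕ) :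
    (∃! f : FreeSd m d →ₗ[Lqz] FreeSd m (d - 1),
      ∀ (α : Fin (d + 1) → SB m) (idx : Fin d → Fin (m - 1)),
        (∀ j, degM (α j) = Multiplicative.ofAdd 0) →
        f (freeElem d (sbWord α idx)) =
          ∑ k : Fin d, freeElem (d - 1) (sbWordRepl α idx k (sG (idx k)))) ∧
    (∀ β : SB m, degM β = Multiplicative.ofAdd d →
      ∃ (α : Fin (d + 1) → SB m) (idx : Fin d → Fin (m - 1)),
        (∀ j, degM (α j) = Multiplicative.ofAdd 0) ∧ sbWord α idx = β) :=
  ⟨⟨replaceTau m d, fun _ idx hα => replaceTau_freeElem_sbWord idx hα,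
      fun _ hf => FreeSd.linearMap_ext_sbWord fun α idx hα =>
        (hf α idx hα).trans (replaceTau_freeElem_sbWord idx hα).symm⟩,
    fun _ => exists_sbWord⟩

/-- For every `n ≥ 2` and `d ≥ 1` there is a unique `ℂ(q,z)`-linear map
`f_{n,1} : ℂ(q,z)[S_dB_n] → ℂ(q,z)[S_{d-1}B_n]` such that for every `β ∈ S_dB_n` and every
expression `β = α_0 τ_{i_1} α_1 ⋯ τ_{i_d} α_d` with `α_0, …, α_d ∈ B_n`, `f_{n,1}(β)` is the
sum of the `d` words obtained by replacing one letter `τ_{i_k}` by `σ_{i_k}`. In particular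
this sum does not depend on the chosen expression, and every `β ∈ S_dB_n` admits such an
expression. -/
theorem exists_unique_f1 (m : ℕ) (hm : 2 ≤ m) (d : ℕ) (hd : 1 ≤ d) :
    (∃! f : FreeSd m d →ₗ[Lqz] FreeSd m (d - 1),
      ∀ (α : Fin (d + 1) → SB m) (idx : Fin d → Fin (m - 1)),
        (∀ j, degM (α j) = Multiplicative.ofAdd 0) →
        f (freeElem d (sbWord α idx)) =
          ∑ k : Fin d, freeElem (d - 1) (sbWordRepl α idx k (sG (idx k)))) ∧
    (∀ β : SB m, degM β = Multiplicative.ofAdd d →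
      ∃ (α : Fin (d + 1) → SB m) (idx : Fin d → Fin (m - 1)),
        (∀ j, degM (α j) = Multiplicative.ofAdd 0) ∧ sbWord α idx = β) :=
  exists_unique_f1_general m d

end

end SingularHOMFLYPT
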